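/- arXiv:1304.4556 — 4 statements merged into one kernel-verified Lean document; each statement's English description precedes it below -/
import Mathlib

section
/- Let $F(t) = 1 - |1 + \sum_{j=1}^r q_j (e^{2\pi i t_j} - 1)|^2$ where $q_j > 0$ and $\sum_{j=1}^r q_j < 1$. Then there exists $c > 0$ such that $F(t) \geq c \|t\|^2$ for all $t$ with $-1/2 \leq t_j < 1/2$ for each $j$. In particular $F(t) \geq 0$ with equality only at $t = 0$. -/
/-!
Write `w j = exp (2πi t j)` and `S = ∑ q j (w j - 1)`, so that `1 - ‖1 + S‖² = -2 Re S - ‖S‖²`.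
As `‖w j‖ = 1`, `-2 Re S = ∑ q j ‖w j - 1‖²`, while Cauchy–Schwarz gives
`‖S‖² ≤ (∑ q j) ∑ q j ‖w j - 1‖²`; hence `F ≥ (1 - ∑ q j) ∑ q j ‖w j - 1‖²`.
Finally `‖exp (2πi t) - 1‖ = 2 |sin (π t)| ≥ 4 |t|` for `|t| ≤ 1/2` by Jordan's inequality.
-/

open Real

namespace Complex

theorem norm_sub_one_sq_le_two_mul_one_sub_re {w : ℂ} (hw : ‖w‖ ≤ 1) :
    ‖w - 1‖ ^ 2 ≤ 2 * (1 - w.re) := by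
  have hw2 : w.re ^ 2 + w.im ^ 2 ≤ 1 := by
    rw [← sq_le_one_iff₀ (norm_nonneg w), Complex.sq_norm, normSq_apply] at hw
    nlinarith
  rw [Complex.sq_norm, normSq_apply, sub_re, sub_im, one_re, one_im]
  nlinarith

theorem four_mul_abs_le_norm_exp_two_pi_I_mul_sub_one {t : ℝ} (ht : |t| ≤ 1 / 2) :
    4 * |t| ≤ ‖exp (2 * π * I * t) - 1‖ := by
  have hsin : 2 / π * |π * t| ≤ |Real.sin (π * t)| :=
    Real.mul_abs_le_abs_sin <| by
      rw [abs_mul, abs_of_pos pi_pos]; nlinarith [pi_pos]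
  rw [show 2 * π * I * t = I * ((2 * π * t : ℝ) : ℂ) by push_cast; ring,
    norm_exp_I_mul_ofReal_sub_one, show 2 * π * t / 2 = π * t by ring, norm_mul,
    Real.norm_eq_abs, Real.norm_eq_abs, abs_two]
  rw [abs_mul, abs_of_pos pi_pos, ← mul_assoc, div_mul_cancel₀ _ pi_ne_zero] at hsin
  linarith

theorem mul_sum_norm_sub_one_sq_le_one_sub_norm_sq {ι : Type*} (s : Finset ι) {q : ι → ℝ}
    (hq : ∀ j ∈ s, 0 ≤ q j) {w : ι → ℂ} (hw : ∀ j ∈ s, ‖w j‖ ≤ 1) :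
    (1 - ∑ j ∈ s, q j) * ∑ j ∈ s, q j * ‖w j - 1‖ ^ 2 ≤
      1 - ‖1 + ∑ j ∈ s, (q j : ℂ) * (w j - 1)‖ ^ 2 := by
  set S := ∑ j ∈ s, (q j : ℂ) * (w j - 1)
  have hexpand : ‖1 + S‖ ^ 2 = 1 + 2 * S.re + ‖S‖ ^ 2 := by
    rw [norm_add_sq_real, Complex.inner, norm_one]; simp
  have hre : ∑ j ∈ s, q j * ‖w j - 1‖ ^ 2 ≤ -2 * S.re := by
    simp only [S, re_sum, re_ofReal_mul, sub_re, one_re, Finset.mul_sum]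
    refine Finset.sum_le_sum fun j hj => ?_
    nlinarith [norm_sub_one_sq_le_two_mul_one_sub_re (hw j hj), hq j hj]
  have hnorm : ‖S‖ ≤ ∑ j ∈ s, q j * ‖w j - 1‖ :=
    (norm_sum_le _ _).trans <| Finset.sum_le_sum fun j hj => by
      rw [norm_mul, norm_real, Real.norm_of_nonneg (hq j hj)]
  have hcs : (∑ j ∈ s, q j * ‖w j - 1‖) ^ 2 ≤
      (∑ j ∈ s, q j) * ∑ j ∈ s, q j * ‖w j - 1‖ ^ 2 :=
    Finset.sum_sq_le_sum_mul_sum_of_sq_le_mul s hq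
      (fun j hj => mul_nonneg (hq j hj) (sq_nonneg _)) fun j _ => le_of_eq (by ring)
  nlinarith [pow_le_pow_left₀ (norm_nonneg S) hnorm 2]

end Complex

theorem exists_pos_forall_le {ι : Type*} [Finite ι] {q : ι → ℝ} (hq : ∀ j, 0 < q j) :
    ∃ m, 0 < m ∧ ∀ j, m ≤ q j := by
  cases isEmpty_or_nonempty ι
  · exact ⟨1, one_pos, isEmptyElim⟩
  · obtain ⟨j₀, hj₀⟩ := Finite.exists_min q
    exact ⟨q j₀, hq j₀, hj₀⟩

theorem exists_pos_mul_sum_sq_le_one_sub_norm_sq {ι : Type*} [Fintype ι] {q : ι → ℝ}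
    (hq : ∀ j, 0 < q j) (hsum : ∑ j, q j < 1) :
    ∃ c, 0 < c ∧ ∀ t : ι → ℝ, (∀ j, |t j| ≤ 1 / 2) →
      c * ∑ j, t j ^ 2 ≤
        1 - ‖1 + ∑ j, (q j : ℂ) * (Complex.exp (2 * π * Complex.I * t j) - 1)‖ ^ 2 := by
  obtain ⟨m, hm, hmq⟩ := exists_pos_forall_le hq
  have hgap : 0 < 1 - ∑ j, q j := sub_pos.2 hsum
  refine ⟨16 * (1 - ∑ j, q j) * m, by positivity, fun t ht => ?_⟩
  have hterm (j : ι) : m * (16 * t j ^ 2) ≤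
      q j * ‖Complex.exp (2 * π * Complex.I * t j) - 1‖ ^ 2 := by
    have h := pow_le_pow_left₀ (by positivity)
      (Complex.four_mul_abs_le_norm_exp_two_pi_I_mul_sub_one (ht j)) 2
    rw [mul_pow, sq_abs] at h
    exact mul_le_mul (hmq j) (by linarith) (by positivity) (hq j).le
  calc 16 * (1 - ∑ j, q j) * m * ∑ j, t j ^ 2
      = (1 - ∑ j, q j) * ∑ j, m * (16 * t j ^ 2) := by
        rw [Finset.mul_sum, Finset.mul_sum]; ring_nf
    _ ≤ (1 - ∑ j, q j) * ∑ j, q j * ‖Complex.exp (2 * π * Complex.I * t j) - 1‖ ^ 2 :=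
        mul_le_mul_of_nonneg_left (Finset.sum_le_sum fun j _ => hterm j) hgap.le
    _ ≤ _ := Complex.mul_sum_norm_sub_one_sq_le_one_sub_norm_sq _ (fun j _ => (hq j).le)
        fun j _ => by simp [Complex.norm_exp]

theorem F_lower_bound_general
    (r : ℕ) (q : Fin r → ℝ) (hq : ∀ j, 0 < q j) (hsum : ∑ j, q j < 1) :
    (∃ c : ℝ, 0 < c ∧ ∀ t : Fin r → ℝ, (∀ j, -(1/2) ≤ t j ∧ t j < 1/2) →
      c * ∑ j, (t j) ^ 2 ≤
        1 - ‖1 + ∑ j, (q j : ℂ) * (Complex.exp (2 * π * Complex.I * (t j)) - 1)‖ ^ 2) ∧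
    (∀ t : Fin r → ℝ, (∀ j, -(1/2) ≤ t j ∧ t j < 1/2) →
      0 ≤ 1 - ‖1 + ∑ j, (q j : ℂ) * (Complex.exp (2 * π * Complex.I * (t j)) - 1)‖ ^ 2
      ∧ (1 - ‖1 + ∑ j, (q j : ℂ) * (Complex.exp (2 * π * Complex.I * (t j)) - 1)‖ ^ 2
            = 0 → t = 0)) := by
  obtain ⟨c, hc, hbound⟩ := exists_pos_mul_sum_sq_le_one_sub_norm_sq hq hsum
  have hbound' (t : Fin r → ℝ) (ht : ∀ j, -(1/2) ≤ t j ∧ t j < 1/2) :=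
    hbound t fun j => abs_le.2 ⟨(ht j).1, (ht j).2.le⟩
  refine ⟨⟨c, hc, hbound'⟩, fun t ht => ?_⟩
  have hsq : 0 ≤ ∑ j, t j ^ 2 := Finset.sum_nonneg fun j _ => sq_nonneg _
  refine ⟨(mul_nonneg hc.le hsq).trans (hbound' t ht), fun hzero => ?_⟩
  have hsum_sq : ∑ j, t j ^ 2 = 0 :=
    le_antisymm (nonpos_of_mul_nonpos_right (hzero ▸ hbound' t ht) hc) hsq
  funext j
  exact pow_eq_zero_iff two_ne_zero |>.1 <|
    congrFun ((Fintype.sum_eq_zero_iff_of_nonneg fun j => sq_nonneg (t j)).1 hsum_sq) j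

/-- For `F(t) = 1 - |1 + ∑ q_j (e^{2πi t_j} - 1)|²` with `q_j > 0` and `∑ q_j < 1`, there
is `c > 0` with `F(t) ≥ c ‖t‖²` on the cube `[-1/2, 1/2)^r`; in particular `F ≥ 0` with
equality only at `0`. -/
theorem F_lower_bound
    (r : ℕ) (hr : 1 ≤ r) (q : Fin r → ℝ) (hq : ∀ j, 0 < q j) (hsum : ∑ j, q j < 1) :
    (∃ c : ℝ, 0 < c ∧ ∀ t : Fin r → ℝ, (∀ j, -(1/2) ≤ t j ∧ t j < 1/2) →
      c * ∑ j, (t j) ^ 2 ≤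
        1 - ‖1 + ∑ j, (q j : ℂ) * (Complex.exp (2 * π * Complex.I * (t j)) - 1)‖ ^ 2) ∧
    (∀ t : Fin r → ℝ, (∀ j, -(1/2) ≤ t j ∧ t j < 1/2) →
      0 ≤ 1 - ‖1 + ∑ j, (q j : ℂ) * (Complex.exp (2 * π * Complex.I * (t j)) - 1)‖ ^ 2
      ∧ (1 - ‖1 + ∑ j, (q j : ℂ) * (Complex.exp (2 * π * Complex.I * (t j)) - 1)‖ ^ 2
            = 0 → t = 0)) :=
  F_lower_bound_general r q hq hsum
end

section
/- Let $(a_{k,r})_{(k,r) \in \mathbb{Z}^2}$ be complex numbers with $\sum_{(k,r)} (1 + |k| + |r|) |a_{k,r}| < \infty$. Then $\sum_{k,r \geq 0} \big(\sum_{t \geq k, s \geq r} |a_{t,s}|\big)^2 \leq \big(\sum_{t,s \geq 0} (1 + t + s) |a_{t,s}|\big)^2$. -/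
open scoped ENNReal

/-!
Write `T k r` for the tail sum `∑_{t ≥ k, s ≥ r} |a_{t,s}|`. It decreases in each index, so
`T k r ^ 2 ≤ T k 0 * T 0 r` and the double sum is at most `(∑ k, T k 0) * (∑ r, T 0 r)`.
The first factor counts `|a_{t,s}|` once for each `k ≤ t`, i.e. `t + 1` times, and the second
`s + 1` times, so each is at most `∑ (1 + t + s) |a_{t,s}|`.
-/

open Finset Function

theorem ENNReal.tsum_tsum_comp_add (g : ℕ → ℝ≥0∞) :
    ∑' k, ∑' t, g (k + t) = ∑' n, (n + 1) * g n := by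
  rw [← ENNReal.tsum_prod, ← HasAntidiagonal.sigmaAntidiagonalEquivProd.tsum_eq,
    ENNReal.tsum_sigma']
  refine tsum_congr fun n => ?_
  calc _ = ∑' _ : antidiagonal n, g n :=
        tsum_congr fun p => congrArg g (mem_antidiagonal.mp p.2)
    _ = (n + 1) * g n := by
      rw [tsum_fintype, sum_const, card_univ, Fintype.card_coe, Nat.card_antidiagonal,
        nsmul_eq_mul]
      push_cast; rfl

section TailSum

variable (f : ℕ → ℕ → ℝ≥0∞)

noncomputable def tailSum (k r : ℕ) : ℝ≥0∞ :=
  ∑' t, ∑' s, f (k + t) (r + s)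

theorem tailSum_swap (k r : ℕ) : tailSum (swap f) r k = tailSum f k r :=
  ENNReal.tsum_comm

theorem tailSum_le_tailSum_zero_right (k r : ℕ) : tailSum f k r ≤ tailSum f k 0 := by
  simp only [tailSum, zero_add]
  exact ENNReal.tsum_le_tsum fun t =>
    ENNReal.tsum_comp_le_tsum_of_injective (add_right_injective r) _

theorem tailSum_le_tailSum_zero_left (k r : ℕ) : tailSum f k r ≤ tailSum f 0 r := by
  rw [← tailSum_swap, ← tailSum_swap f]
  exact tailSum_le_tailSum_zero_right _ r k

theorem tsum_tailSum_zero_right_le :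
    ∑' k, tailSum f k 0 ≤ ∑' t, ∑' s, (1 + t + s) * f t s :=
  calc ∑' k, tailSum f k 0 = ∑' s, ∑' k, ∑' t, f (k + t) s := by
        simp only [tailSum, zero_add]
        exact (tsum_congr fun k => ENNReal.tsum_comm).trans ENNReal.tsum_comm
    _ = ∑' t, ∑' s, (t + 1) * f t s :=
        (tsum_congr fun s => ENNReal.tsum_tsum_comp_add fun t => f t s).trans
          ENNReal.tsum_comm
    _ ≤ ∑' t, ∑' s, (1 + t + s) * f t s := by
        refine ENNReal.tsum_le_tsum fun t => ENNReal.tsum_le_tsum fun s => mul_le_mul_left ?_ _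
        rw [add_comm (t : ℝ≥0∞)]
        exact le_self_add

theorem tsum_tailSum_zero_left_le :
    ∑' r, tailSum f 0 r ≤ ∑' t, ∑' s, (1 + t + s) * f t s :=
  calc ∑' r, tailSum f 0 r = ∑' r, tailSum (swap f) r 0 := by simp only [tailSum_swap]
    _ ≤ ∑' s, ∑' t, (1 + s + t) * f t s := tsum_tailSum_zero_right_le _
    _ = ∑' t, ∑' s, (1 + t + s) * f t s := by
        rw [ENNReal.tsum_comm]
        simp only [add_right_comm (1 : ℝ≥0∞)]

theorem tsum_tsum_tailSum_sq_le :
    ∑' k, ∑' r, tailSum f k r ^ 2 ≤ (∑' t, ∑' s, (1 + t + s) * f t s) ^ 2 :=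
  calc ∑' k, ∑' r, tailSum f k r ^ 2 ≤ ∑' k, ∑' r, tailSum f k 0 * tailSum f 0 r := by
        gcongr with k r
        rw [sq]
        exact mul_le_mul' (tailSum_le_tailSum_zero_right f k r)
          (tailSum_le_tailSum_zero_left f k r)
    _ = (∑' k, tailSum f k 0) * ∑' r, tailSum f 0 r := by
        simp only [ENNReal.tsum_mul_left, ENNReal.tsum_mul_right]
    _ ≤ (∑' t, ∑' s, (1 + t + s) * f t s) ^ 2 := by
        rw [sq]
        exact mul_le_mul' (tsum_tailSum_zero_right_le f) (tsum_tailSum_zero_left_le f)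

end TailSum

theorem tail_sum_square_estimate_general
    (a : ℤ × ℤ → ℂ) :
    (∑' k : ℕ, ∑' r : ℕ,
        (∑' t : ℕ, ∑' s : ℕ, (‖a ((k + t : ℕ), (r + s : ℕ))‖₊ : ℝ≥0∞)) ^ 2)
      ≤ (∑' t : ℕ, ∑' s : ℕ,
          ((1 + t + s : ℕ) : ℝ≥0∞) * (‖a ((t : ℤ), (s : ℤ))‖₊ : ℝ≥0∞)) ^ 2 := by
  push_cast
  exact tsum_tsum_tailSum_sq_le fun t s => (‖a (t, s)‖₊ : ℝ≥0∞)

/-- If `∑ (1+|k|+|r|)|a_{k,r}| < ∞` then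
`∑_{k,r ≥ 0} (∑_{t ≥ k, s ≥ r} |a_{t,s}|)² ≤ (∑_{t,s ≥ 0} (1+t+s)|a_{t,s}|)²`
(stated in `ℝ≥0∞` so that all sums are well defined). -/
theorem tail_sum_square_estimate
    (a : ℤ × ℤ → ℂ)
    (h : Summable (fun p : ℤ × ℤ => (1 + |p.1| + |p.2| : ℝ) * ‖a p‖)) :
    (∑' k : ℕ, ∑' r : ℕ,
        (∑' t : ℕ, ∑' s : ℕ, (‖a ((k + t : ℕ), (r + s : ℕ))‖₊ : ℝ≥0∞)) ^ 2)
      ≤ (∑' t : ℕ, ∑' s : ℕ,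
          ((1 + t + s : ℕ) : ℝ≥0∞) * (‖a ((t : ℤ), (s : ℤ))‖₊ : ℝ≥0∞)) ^ 2 :=
  tail_sum_square_estimate_general a
end

section
/- Let $P_1, P_2$ be commuting contractions of a Hilbert space, $f$ a vector, and suppose $\|P_1^n f\| \leq M n^{-r}$ for all $n \geq 1$, with $r \geq 1$. Let $\alpha \in (0,1]$, $\beta = 1 - \alpha$. Then there exists $M' < \infty$ such that $\|(\alpha P_1 + \beta P_2)^n f\| \leq M' n^{-r}$ for all $n \geq 1$. -/
open Finset

set_option maxHeartbeats 1000000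
set_option synthInstance.maxHeartbeats 400000

private lemma bcpd_contr {H : Type*} [NormedAddCommGroup H] [NormedSpace ℝ H]
    (P : H →L[ℝ] H) (hP : ‖P‖ ≤ 1) (j : ℕ) (v : H) : ‖(P ^ j) v‖ ≤ ‖v‖ := by
  induction j with
  | zero => simp
  | succ j ih =>
    rw [pow_succ', ContinuousLinearMap.mul_apply]
    calc ‖P ((P ^ j) v)‖ ≤ ‖P‖ * ‖(P^j) v‖ := P.le_opNorm _
    _ ≤ 1 * ‖v‖ := mul_le_mul hP ih (norm_nonneg _) zero_le_one
    _ = ‖v‖ := one_mul _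

private lemma bcpd_const (c : ℝ) (hc0 : 0 ≤ c) (hc1 : c < 1) (r : ℝ) :
    ∃ C, ∀ n : ℕ, 1 ≤ n → (n:ℝ)^r * c^n ≤ C := by
  set k := ⌈r⌉₊
  have h1 : Filter.Tendsto (fun n : ℕ => (n:ℝ)^k * c^n) Filter.atTop (nhds 0) := by
    have := (summable_norm_pow_mul_geometric_of_norm_lt_one (R := ℝ) k
      (by rwa [Real.norm_eq_abs, abs_of_nonneg hc0])).tendsto_atTop_zero
    simpa using this.congr (by intro n; simp [abs_of_nonneg, hc0, pow_nonneg, mul_nonneg]) |>.comp Filter.tendsto_id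
  obtain ⟨C, hC⟩ := h1.bddAbove_range
  refine ⟨C, fun n hn => ?_⟩
  have h2 : (n:ℝ)^r ≤ (n:ℝ)^(k:ℕ) := by
    rw [← Real.rpow_natCast]
    exact Real.rpow_le_rpow_of_exponent_le (by exact_mod_cast hn) (Nat.le_ceil r)
  calc (n:ℝ)^r * c^n ≤ (n:ℝ)^(k:ℕ) * c^n :=
        mul_le_mul_of_nonneg_right h2 (pow_nonneg hc0 n)
  _ ≤ C := hC ⟨n, rfl⟩

private lemma bcpd_c_lt_one (α : ℝ) (hα : 0 < α) : (2:ℝ)^(α/2) * (1 - α/2) < 1 := by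
  have h1 : (2:ℝ)^(α/2) = Real.exp (α/2 * Real.log 2) := by
    rw [Real.rpow_def_of_pos (by norm_num)]; ring_nf
  have h2 : (1 : ℝ) - α/2 ≤ Real.exp (-(α/2)) := by
    have := Real.add_one_le_exp (-(α/2)); linarith
  calc (2:ℝ)^(α/2) * (1 - α/2) ≤ Real.exp (α/2 * Real.log 2) * Real.exp (-(α/2)) := by
        rw [h1]
        exact mul_le_mul_of_nonneg_left h2 (Real.exp_pos _).le
  _ = Real.exp (α/2 * Real.log 2 - α/2) := by rw [← Real.exp_add]; ring_nf
  _ < 1 := by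
      rw [Real.exp_lt_one_iff]
      have hlog : Real.log 2 < 1 := by
        have := Real.log_two_lt_d9; linarith
      nlinarith

private lemma bcpd_expand {H : Type*} [NormedAddCommGroup H] [NormedSpace ℝ H]
    (P₁ P₂ : H →L[ℝ] H) (hP₂ : ‖P₂‖ ≤ 1) (hcomm : Commute P₁ P₂)
    (f : H) (α β : ℝ) (hα : 0 ≤ α) (hβ0 : 0 ≤ β) (n : ℕ) :
    ‖((α • P₁ + β • P₂) ^ n) f‖ ≤
      ∑ k ∈ range (n+1), (n.choose k : ℝ) * α^k * β^(n-k) * ‖(P₁^k) f‖ := by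
  have hcomm' : Commute (α • P₁) (β • P₂) := (hcomm.smul_left α).smul_right β
  have expand := hcomm'.add_pow n
  rw [expand]
  have happ : ∀ k ∈ range (n+1),
      (((α • P₁)^k * (β • P₂)^(n-k) * (n.choose k : H →L[ℝ] H)) f)
        = ((n.choose k : ℝ) * α^k * β^(n-k)) • ((P₂^(n-k)) ((P₁^k) f)) := by
    intro k hk
    have h1 : (α • P₁)^k = α^k • P₁^k := smul_pow α P₁ k
    have h2 : (β • P₂)^(n-k) = β^(n-k) • P₂^(n-k) := smul_pow β P₂ (n-k)
    have h3 : (P₁^k) * (P₂^(n-k)) = (P₂^(n-k)) * (P₁^k) := (hcomm.pow_pow k (n-k)).eq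
    simp only [ContinuousLinearMap.mul_apply, h1, h2]
    have h4 : ((n.choose k : H →L[ℝ] H)) f = (n.choose k : ℝ) • f := by
      induction n.choose k with
      | zero => simp
      | succ m ih =>
          rw [Nat.cast_succ, ContinuousLinearMap.add_apply, ih, Nat.cast_succ, add_smul,
            one_smul, ContinuousLinearMap.one_apply]
    have h3' : ∀ v, (P₁^k) ((P₂^(n-k)) v) = (P₂^(n-k)) ((P₁^k) v) := by
      intro v
      rw [← ContinuousLinearMap.mul_apply, ← ContinuousLinearMap.mul_apply, h3]
    rw [h4]
    simp only [ContinuousLinearMap.smul_apply, map_smul, h3' f, smul_smul]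
    ring_nf
  rw [ContinuousLinearMap.sum_apply]
  calc ‖∑ k ∈ range (n+1), (((α • P₁)^k * (β • P₂)^(n-k) * (n.choose k : H →L[ℝ] H)) f)‖
      ≤ ∑ k ∈ range (n+1), ‖(((α • P₁)^k * (β • P₂)^(n-k) * (n.choose k : H →L[ℝ] H)) f)‖ :=
        norm_sum_le _ _
  _ ≤ ∑ k ∈ range (n+1), (n.choose k : ℝ) * α^k * β^(n-k) * ‖(P₁^k) f‖ := by
      apply Finset.sum_le_sum
      intro k hk
      rw [happ k hk, norm_smul]
      have hw : 0 ≤ (n.choose k : ℝ) * α^k * β^(n-k) := by positivity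
      rw [Real.norm_eq_abs, abs_of_nonneg hw]
      exact mul_le_mul_of_nonneg_left (bcpd_contr P₂ hP₂ (n-k) _) hw


/-- If `P₁, P₂` are commuting contractions, `‖P₁ⁿ f‖ ≤ M n^{-r}` with `r ≥ 1`, and
`α ∈ (0,1]`, `β = 1 - α`, then `‖(αP₁ + βP₂)ⁿ f‖ ≤ M' n^{-r}` for some `M' < ∞`. -/
theorem barycenter_contraction_polynomial_decay
    {H : Type*} [NormedAddCommGroup H] [NormedSpace ℝ H]
    (P₁ P₂ : H →L[ℝ] H) (hP₁ : ‖P₁‖ ≤ 1) (hP₂ : ‖P₂‖ ≤ 1) (hcomm : Commute P₁ P₂)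
    (f : H) (r M : ℝ) (hr : 1 ≤ r)
    (hdecay : ∀ n : ℕ, 1 ≤ n → ‖(P₁ ^ n) f‖ ≤ M * (n : ℝ) ^ (-r))
    (α : ℝ) (hα : 0 < α) (hα1 : α ≤ 1) (β : ℝ) (hβ : β = 1 - α) :
    ∃ M' : ℝ, ∀ n : ℕ, 1 ≤ n → ‖((α • P₁ + β • P₂) ^ n) f‖ ≤ M' * (n : ℝ) ^ (-r) := by
  have hβ0 : 0 ≤ β := by rw [hβ]; linarith
  have hαβ : α + β = 1 := by rw [hβ]; ring
  have hM : 0 ≤ M := by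
    have h := hdecay 1 le_rfl
    have h1 : ((1:ℕ):ℝ) ^ (-r) = 1 := by norm_num
    nlinarith [norm_nonneg ((P₁ ^ 1) f), h1 ▸ h]
  set c : ℝ := (2:ℝ)^(α/2) * (1 - α/2) with hcdef
  have hc0 : 0 ≤ c := mul_nonneg (Real.rpow_nonneg (by norm_num) _) (by linarith)
  have hc1 : c < 1 := bcpd_c_lt_one α hα
  obtain ⟨C, hC⟩ := bcpd_const c hc0 hc1 r
  have hC0 : 0 ≤ C := le_trans (by positivity) (hC 1 le_rfl)
  have hcn : ∀ n:ℕ, 1 ≤ n → c^n ≤ C * (n:ℝ)^(-r) := by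
    intro n hn
    have h := hC n hn
    have hnp : (0:ℝ) < (n:ℝ) := by exact_mod_cast hn
    have hp : (0:ℝ) < (n:ℝ)^r := Real.rpow_pos_of_pos hnp r
    rw [Real.rpow_neg hnp.le, ← div_eq_mul_inv, le_div_iff₀ hp]
    nlinarith
  refine ⟨2*‖f‖*C + M*(α/2)^(-r), fun n hn => ?_⟩
  have hnp : (0:ℝ) < (n:ℝ) := by exact_mod_cast hn
  set m := ⌈α * n / 2⌉₊ with hmdef
  have hm1 : 1 ≤ m := Nat.ceil_pos.mpr (by positivity)
  have hmge : α * n / 2 ≤ (m:ℝ) := Nat.le_ceil _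
  have hmle : (m:ℝ) ≤ α * n / 2 + 1 := by
    have := Nat.ceil_lt_add_one (show (0:ℝ) ≤ α * n / 2 by positivity)
    exact this.le
  set w : ℕ → ℝ := fun k => (n.choose k : ℝ) * α^k * β^(n-k) with hwdef
  have hw0 : ∀ k, 0 ≤ w k := fun k => by positivity
  have key : ‖((α • P₁ + β • P₂) ^ n) f‖ ≤ ∑ k ∈ range (n+1), w k * ‖(P₁^k) f‖ := by
    exact bcpd_expand P₁ P₂ hP₂ hcomm f α β hα.le hβ0 n
  have hwsum : ∑ k ∈ range (n+1), w k = 1 := by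
    have := add_pow α β n
    rw [hαβ, one_pow] at this
    rw [this]
    exact Finset.sum_congr rfl (fun k _ => by simp only [hwdef]; ring)
  -- split the sum
  have hsplit := (Finset.sum_filter_add_sum_filter_not (range (n+1))
    (fun k => k < m) (fun k => w k * ‖(P₁^k) f‖)).symm
  -- tail bound
  have hbin2 : ∑ k ∈ range (n+1), (n.choose k : ℝ) * (α/2)^k * β^(n-k) = (1 - α/2)^n := by
    have := add_pow (α/2) β n
    have hab : α/2 + β = 1 - α/2 := by rw [hβ]; ring
    rw [hab] at this
    rw [this]
    exact Finset.sum_congr rfl (fun k _ => by ring)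
  have h2m : (2:ℝ)^m * (1 - α/2)^n ≤ 2 * c^n := by
    have hx : ((2:ℝ)^m : ℝ) = (2:ℝ)^((m:ℕ):ℝ) := (Real.rpow_natCast 2 m).symm
    have h1 : (2:ℝ)^((m:ℕ):ℝ) ≤ (2:ℝ)^(α * n / 2 + 1) :=
      Real.rpow_le_rpow_of_exponent_le one_le_two hmle
    have h2 : (2:ℝ)^(α * n / 2 + 1) = 2 * ((2:ℝ)^(α/2))^n := by
      rw [Real.rpow_add (by norm_num : (0:ℝ) < 2)]
      have : α * n / 2 = (α/2) * (n:ℝ) := by ring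
      rw [this, Real.rpow_mul (by norm_num : (0:ℝ) ≤ 2), Real.rpow_natCast,
        Real.rpow_one]
      ring
    have h3 : (2:ℝ)^m ≤ 2 * ((2:ℝ)^(α/2))^n := by rw [hx]; rw [h2] at h1; exact h1
    have h4 : (0:ℝ) ≤ (1 - α/2)^n := pow_nonneg (by linarith) n
    calc (2:ℝ)^m * (1 - α/2)^n ≤ (2 * ((2:ℝ)^(α/2))^n) * (1 - α/2)^n :=
          mul_le_mul_of_nonneg_right h3 h4
    _ = 2 * c^n := by rw [hcdef, mul_pow]; ring
  have tail : ∑ k ∈ (range (n+1)).filter (fun k => k < m), w k * ‖(P₁^k) f‖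
      ≤ 2 * c^n * ‖f‖ := by
    have hterm : ∀ k ∈ (range (n+1)).filter (fun k => k < m),
        w k * ‖(P₁^k) f‖ ≤ (2:ℝ)^m * ((n.choose k : ℝ) * (α/2)^k * β^(n-k) * ‖f‖) := by
      intro k hk
      rw [Finset.mem_filter] at hk
      have hkm : k ≤ m := hk.2.le
      have hα2 : α^k = 2^k * (α/2)^k := by rw [← mul_pow, show (2:ℝ)*(α/2) = α by ring]
      have h2k : (2:ℝ)^k ≤ (2:ℝ)^m := pow_le_pow_right₀ one_le_two hkm
      calc w k * ‖(P₁^k) f‖ ≤ w k * ‖f‖ :=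
            mul_le_mul_of_nonneg_left (bcpd_contr P₁ hP₁ k f) (hw0 k)
      _ = (2:ℝ)^k * ((n.choose k : ℝ) * (α/2)^k * β^(n-k) * ‖f‖) := by
            rw [hwdef]; simp only []; rw [hα2]; ring
      _ ≤ (2:ℝ)^m * ((n.choose k : ℝ) * (α/2)^k * β^(n-k) * ‖f‖) :=
            mul_le_mul_of_nonneg_right h2k (by positivity)
    calc ∑ k ∈ (range (n+1)).filter (fun k => k < m), w k * ‖(P₁^k) f‖
        ≤ ∑ k ∈ (range (n+1)).filter (fun k => k < m),
            (2:ℝ)^m * ((n.choose k : ℝ) * (α/2)^k * β^(n-k) * ‖f‖) :=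
          Finset.sum_le_sum hterm
    _ ≤ ∑ k ∈ range (n+1), (2:ℝ)^m * ((n.choose k : ℝ) * (α/2)^k * β^(n-k) * ‖f‖) :=
          Finset.sum_le_sum_of_subset_of_nonneg (Finset.filter_subset _ _)
            (fun k _ _ => by positivity)
    _ = (2:ℝ)^m * (1 - α/2)^n * ‖f‖ := by
          rw [← Finset.mul_sum]
          rw [show ∀ s : Finset ℕ, ∑ k ∈ s, ((n.choose k : ℝ) * (α/2)^k * β^(n-k) * ‖f‖)
              = (∑ k ∈ s, (n.choose k : ℝ) * (α/2)^k * β^(n-k)) * ‖f‖ from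
            fun s => by rw [Finset.sum_mul]]
          rw [hbin2, mul_assoc]
    _ ≤ 2 * c^n * ‖f‖ := by
          apply mul_le_mul_of_nonneg_right h2m (norm_nonneg f)
  -- head bound
  have hDpos : (0:ℝ) ≤ M * (α/2)^(-r) * (n:ℝ)^(-r) := by positivity
  have head : ∑ k ∈ (range (n+1)).filter (fun k => ¬ k < m), w k * ‖(P₁^k) f‖
      ≤ M * (α/2)^(-r) * (n:ℝ)^(-r) := by
    have hterm : ∀ k ∈ (range (n+1)).filter (fun k => ¬ k < m),
        w k * ‖(P₁^k) f‖ ≤ w k * (M * (α/2)^(-r) * (n:ℝ)^(-r)) := by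
      intro k hk
      rw [Finset.mem_filter] at hk
      have hmk : m ≤ k := Nat.le_of_not_lt hk.2
      have hk1 : 1 ≤ k := le_trans hm1 hmk
      have hkp : (0:ℝ) < (k:ℝ) := by exact_mod_cast hk1
      have hmp : (0:ℝ) < (m:ℝ) := by exact_mod_cast hm1
      have hq : (0:ℝ) < α * n / 2 := by positivity
      have hd1 : (k:ℝ)^(-r) ≤ (α * n / 2)^(-r) := by
        rw [Real.rpow_neg hkp.le, Real.rpow_neg hq.le]
        apply inv_anti₀ (Real.rpow_pos_of_pos hq r)
        apply Real.rpow_le_rpow hq.le _ (by linarith)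
        calc α * n / 2 ≤ (m:ℝ) := hmge
        _ ≤ (k:ℝ) := by exact_mod_cast hmk
      have hd2 : (α * n / 2)^(-r) = (α/2)^(-r) * (n:ℝ)^(-r) := by
        rw [show α * n / 2 = (α/2) * (n:ℝ) by ring,
          Real.mul_rpow (by positivity) hnp.le]
      have hnorm : ‖(P₁^k) f‖ ≤ M * (α/2)^(-r) * (n:ℝ)^(-r) := by
        calc ‖(P₁^k) f‖ ≤ M * (k:ℝ)^(-r) := hdecay k hk1
        _ ≤ M * ((α/2)^(-r) * (n:ℝ)^(-r)) := by
              rw [← hd2]; exact mul_le_mul_of_nonneg_left hd1 hM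
        _ = M * (α/2)^(-r) * (n:ℝ)^(-r) := by ring
      exact mul_le_mul_of_nonneg_left hnorm (hw0 k)
    calc ∑ k ∈ (range (n+1)).filter (fun k => ¬ k < m), w k * ‖(P₁^k) f‖
        ≤ ∑ k ∈ (range (n+1)).filter (fun k => ¬ k < m),
            w k * (M * (α/2)^(-r) * (n:ℝ)^(-r)) := Finset.sum_le_sum hterm
    _ = (∑ k ∈ (range (n+1)).filter (fun k => ¬ k < m), w k)
          * (M * (α/2)^(-r) * (n:ℝ)^(-r)) := by rw [Finset.sum_mul]
    _ ≤ 1 * (M * (α/2)^(-r) * (n:ℝ)^(-r)) := by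
          apply mul_le_mul_of_nonneg_right _ hDpos
          rw [← hwsum]
          exact Finset.sum_le_sum_of_subset_of_nonneg (Finset.filter_subset _ _)
            (fun k _ _ => hw0 k)
    _ = M * (α/2)^(-r) * (n:ℝ)^(-r) := one_mul _
  -- combine
  calc ‖((α • P₁ + β • P₂) ^ n) f‖ ≤ ∑ k ∈ range (n+1), w k * ‖(P₁^k) f‖ := key
  _ = ∑ k ∈ (range (n+1)).filter (fun k => k < m), w k * ‖(P₁^k) f‖
      + ∑ k ∈ (range (n+1)).filter (fun k => ¬ k < m), w k * ‖(P₁^k) f‖ := hsplit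
  _ ≤ 2 * c^n * ‖f‖ + M * (α/2)^(-r) * (n:ℝ)^(-r) := add_le_add tail head
  _ ≤ 2 * (C * (n:ℝ)^(-r)) * ‖f‖ + M * (α/2)^(-r) * (n:ℝ)^(-r) := by
      have := hcn n hn
      nlinarith [norm_nonneg f]
  _ = (2*‖f‖*C + M*(α/2)^(-r)) * (n:ℝ)^(-r) := by ring
end

section
/- Let $(n_1^k, \ldots, n_r^k)_{k\geq 1}$ be a sequence of $r$-tuples in $(\mathbb{Z}^d)^r$. Then there exist a subsequence and a permutation of the indices (keeping the notation), an integer $\kappa \in [1, r]$, a subdivision $1 = r_1 < r_2 < \cdots < r_\kappa \leq r$, and constant vectors $a_j \in \mathbb{Z}^d$ such that: (i) $\min_{1 \leq s \neq s' \leq \kappa} \|n_{r_s}^k - n_{r_{s'}}^k\| \to \infty$ as $k \to \infty$; and (ii) for each index $j$ between consecutive subdivision points $r_s$ and $r_{s+1}$ (and for $j > r_\kappa$ with $s = \kappa$), $n_j^k = n_{r_s}^k + a_j$ for all $k$. Moreover, if $\max_{i\neq j}\|n_i^k - n_j^k\| \to \infty$, one can ensure $\kappa > 1$. -/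
/-!
Pass to a subsequence along which every difference `n_i - n_j` is either constant or tends to
infinity: a sequence in the proper discrete group `ℤᵈ` either takes some value infinitely often or
leaves every finite set. Having constant difference is then an equivalence relation on the
indices; sorting the indices by class makes the classes consecutive blocks, led by their least
index. If there is only one block, all differences stay bounded along the subsequence, so the
maximal difference cannot diverge.
-/

open Filter Function

theorem exists_subseq_const_or_tendsto_cofinite {α : Type*} (u : ℕ → α) :
    (∃ ψ : ℕ → ℕ, StrictMono ψ ∧ ∃ c, ∀ k, u (ψ k) = c) ∨ Tendsto u atTop cofinite := by
  by_cases h : ∃ c, ∃ᶠ k in atTop, u k = c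
  · obtain ⟨c, hc⟩ := h
    obtain ⟨ψ, hψ, hψc⟩ := extraction_of_frequently_atTop hc
    exact Or.inl ⟨ψ, hψ, c, hψc⟩
  · simp only [not_exists, not_frequently] at h
    exact Or.inr (le_cofinite_iff_eventually_ne.2 fun c => (h c).mono fun _ => id)

section ProperDiscrete

variable {E : Type*} [SeminormedAddCommGroup E] [ProperSpace E] [DiscreteTopology E]

theorem exists_subseq_const_or_tendsto_norm (u : ℕ → E) :
    ∃ ψ : ℕ → ℕ, StrictMono ψ ∧
      ((∃ c, ∀ k, u (ψ k) = c) ∨ Tendsto (fun k => ‖u (ψ k)‖) atTop atTop) := by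
  rcases exists_subseq_const_or_tendsto_cofinite u with ⟨ψ, hψ, hc⟩ | hu
  · exact ⟨ψ, hψ, Or.inl hc⟩
  · refine ⟨id, strictMono_id, Or.inr ?_⟩
    rw [← cocompact_eq_cofinite] at hu
    exact tendsto_norm_cocompact_atTop.comp hu

theorem exists_subseq_forall_const_or_tendsto_norm {ι : Type*} [Finite ι] (u : ι → ℕ → E) :
    ∃ ψ : ℕ → ℕ, StrictMono ψ ∧ ∀ i,
      ((∃ c, ∀ k, u i (ψ k) = c) ∨ Tendsto (fun k => ‖u i (ψ k)‖) atTop atTop) := by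
  have := Fintype.ofFinite ι
  suffices ∀ s : Finset ι, ∃ ψ : ℕ → ℕ, StrictMono ψ ∧ ∀ i ∈ s,
      ((∃ c, ∀ k, u i (ψ k) = c) ∨ Tendsto (fun k => ‖u i (ψ k)‖) atTop atTop) by
    simpa using this Finset.univ
  intro s
  induction s using Finset.cons_induction with
  | empty => exact ⟨id, strictMono_id, by simp⟩
  | cons i s _ ih =>
    obtain ⟨ψ, hψ, hs⟩ := ih
    obtain ⟨ψ', hψ', hi⟩ := exists_subseq_const_or_tendsto_norm (fun k => u i (ψ k))
    refine ⟨ψ ∘ ψ', hψ.comp hψ', (Finset.forall_mem_cons _ _).2 ⟨hi, fun j hj => ?_⟩⟩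
    rcases hs j hj with ⟨c, hc⟩ | ht
    · exact Or.inl ⟨c, fun k => hc (ψ' k)⟩
    · exact Or.inr (ht.comp hψ'.tendsto_atTop)

end ProperDiscrete

section LeastPreimage

variable {α β : Type*} [Fintype α] [LinearOrder α] [DecidableEq β] {g : α → β}

def leastPreimage (hg : Surjective g) (b : β) : α :=
  (Finset.univ.filter (g · = b)).min' <| (hg b).elim fun a ha => ⟨a, by simp [ha]⟩

theorem apply_leastPreimage (hg : Surjective g) (b : β) : g (leastPreimage hg b) = b := by
  simpa [leastPreimage] using Finset.min'_mem (Finset.univ.filter (g · = b)) _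

theorem leastPreimage_apply_le (hg : Surjective g) (a : α) : leastPreimage hg (g a) ≤ a :=
  Finset.min'_le _ _ (by simp)

theorem gc_leastPreimage [PartialOrder β] (hmono : Monotone g) (hg : Surjective g) :
    GaloisConnection (leastPreimage hg) g := by
  intro b a
  refine ⟨fun h => apply_leastPreimage hg b ▸ hmono h, fun h => ?_⟩
  by_contra! hlt
  have hb : g a = b := le_antisymm (apply_leastPreimage hg b ▸ hmono hlt.le) h
  exact (leastPreimage_apply_le hg a).not_gt (hb ▸ hlt)

end LeastPreimage

theorem Setoid.exists_surjective_fin_eq_iff {α : Type*} [Fintype α] (R : Setoid α) :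
    ∃ κ ≤ Fintype.card α, ∃ f : α → Fin κ, Surjective f ∧ ∀ i j, f i = f j ↔ R i j := by
  classical
  let e := Fintype.equivFin (Quotient R)
  refine ⟨_, Fintype.card_quotient_le R, fun i => e ⟦i⟧,
    e.surjective.comp Quotient.mk_surjective, fun i j => ?_⟩
  rw [e.apply_eq_iff_eq, Quotient.eq]

/-- The classes of `R`, after relabelling `Fin r` by `σ`, become consecutive intervals
`[rp s, rp (s + 1))`; `blk` sends an index to its interval. -/
theorem Setoid.exists_perm_blocks {r : ℕ} (hr : 1 ≤ r) (R : Setoid (Fin r)) :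
    ∃ σ : Equiv.Perm (Fin r), ∃ κ : ℕ, ∃ hκ : 1 ≤ κ, κ ≤ r ∧
    ∃ rp : Fin κ → Fin r, StrictMono rp ∧ rp ⟨0, hκ⟩ = ⟨0, hr⟩ ∧
    ∃ blk : Fin r → Fin κ, GaloisConnection rp blk ∧ (∀ s, blk (rp s) = s) ∧
      ∀ i j, blk i = blk j ↔ R (σ i) (σ j) := by
  obtain ⟨κ, hκr, f, hf, hfR⟩ := R.exists_surjective_fin_eq_iff
  have hκ : 1 ≤ κ := (f ⟨0, hr⟩).pos
  let σ := Tuple.sort f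
  have hsurj : Surjective (f ∘ σ) := hf.comp σ.surjective
  have gc := gc_leastPreimage (Tuple.monotone_sort f) hsurj
  refine ⟨σ, κ, hκ, by simpa using hκr, leastPreimage hsurj,
    gc.monotone_l.strictMono_of_injective
      (LeftInverse.injective (apply_leastPreimage hsurj)), ?_,
    f ∘ σ, gc, apply_leastPreimage hsurj, fun i j => hfR (σ i) (σ j)⟩
  exact le_antisymm ((gc _ _).2 (Nat.zero_le _)) (Nat.zero_le _)

section ConstDiff

variable {ι G : Type*}

def constDiffSetoid [AddGroup G] (v : ℕ → ι → G) : Setoid ι where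
  r i j := ∃ c, ∀ k, v k i - v k j = c
  iseqv :=
    { refl := fun _ => ⟨0, fun _ => sub_self _⟩
      symm := fun ⟨c, hc⟩ => ⟨-c, fun k => by rw [← hc k, neg_sub]⟩
      trans := fun ⟨c, hc⟩ ⟨c', hc'⟩ =>
        ⟨c + c', fun k => by rw [← hc k, ← hc' k, sub_add_sub_cancel]⟩ }

theorem exists_norm_sub_le_of_forall_constDiff [Finite ι] [SeminormedAddCommGroup G]
    {v : ℕ → ι → G} (h : ∀ i j, constDiffSetoid v i j) :
    ∃ B, ∀ k i j, ‖v k i - v k j‖ ≤ B := by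
  choose c hc using h
  obtain ⟨B, hB⟩ := Finite.exists_le fun p : ι × ι => ‖c p.1 p.2‖
  exact ⟨B, fun k i j => hc i j k ▸ hB (i, j)⟩

end ConstDiff

/-- Clustering lemma: from any sequence of `r`-tuples in `(ℤᵈ)ʳ` one can extract a
subsequence and permute the indices so that the tuples split into blocks, indexed by a
subdivision `1 = r₁ < r₂ < ⋯ < r_κ ≤ r`, with leaders mutually diverging and the other
entries at constant offsets `a_j` from their block leaders.  If moreover
`max_{i≠j} ‖n_i^k - n_j^k‖ → ∞`, one can ensure `κ > 1`. -/
theorem clustering_subsequence_lemma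
    (d r : ℕ) (hr : 1 ≤ r) (m : ℕ → Fin r → (Fin d → ℤ)) :
    ∃ φ : ℕ → ℕ, StrictMono φ ∧
    ∃ σ : Equiv.Perm (Fin r),
    ∃ κ : ℕ, ∃ hκ : 1 ≤ κ, κ ≤ r ∧
    ∃ rp : Fin κ → Fin r, StrictMono rp ∧ rp ⟨0, hκ⟩ = ⟨0, hr⟩ ∧
    ∃ blk : Fin r → Fin κ, ∃ a : Fin r → (Fin d → ℤ),
      (∀ s s' : Fin κ, s ≠ s' →
        Tendsto (fun k => ‖(fun i => ((m (φ k) (σ (rp s)) i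
            - m (φ k) (σ (rp s')) i : ℤ) : ℝ))‖) atTop atTop) ∧
      (∀ s, blk (rp s) = s) ∧
      (∀ j, rp (blk j) ≤ j) ∧
      (∀ j s, rp s ≤ j → s ≤ blk j) ∧
      (∀ j k, m (φ k) (σ j) = m (φ k) (σ (rp (blk j))) + a j) ∧
      ((∀ C : ℝ, ∀ᶠ k in atTop, ∃ i j : Fin r, i ≠ j ∧
          C ≤ ‖(fun i' => ((m k i i' - m k j i' : ℤ) : ℝ))‖) → 1 < κ) := by
  -- the norms of the casts to `Fin d → ℝ` in the statement are by definition those in `Fin d → ℤ`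
  obtain ⟨φ, hφ, hdich⟩ :=
    exists_subseq_forall_const_or_tendsto_norm fun (p : Fin r × Fin r) k => m k p.1 - m k p.2
  let R := constDiffSetoid fun k => m (φ k)
  obtain ⟨σ, κ, hκ, hκr, rp, hrp, hrp0, blk, gc, hblk, hblkR⟩ := R.exists_perm_blocks hr
  have hlead : ∀ j, R (σ j) (σ (rp (blk j))) := fun j => (hblkR _ _).1 (hblk _).symm
  choose a ha using hlead
  refine ⟨φ, hφ, σ, κ, hκ, hκr, rp, hrp, hrp0, blk, a, fun s s' hss' => ?_, hblk, gc.l_u_le,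
    fun j s => (gc s j).1, fun j k => sub_eq_iff_eq_add'.1 (ha j k), fun hdiv => ?_⟩
  · refine (hdich (σ (rp s), σ (rp s'))).resolve_left fun hR => hss' ?_
    simpa only [hblk] using (hblkR (rp s) (rp s')).2 hR
  · by_contra! hκ1
    have hall : ∀ i j, R i j := fun i j => by
      have := Fin.subsingleton_iff_le_one.2 hκ1
      simpa using (hblkR (σ.symm i) (σ.symm j)).1 (Subsingleton.elim _ _)
    obtain ⟨B, hB⟩ := exists_norm_sub_le_of_forall_constDiff hall
    obtain ⟨k, i, j, -, hk⟩ := (hφ.tendsto_atTop.eventually (hdiv (B + 1))).exists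
    linarith [hB k i j, show B + 1 ≤ ‖m (φ k) i - m (φ k) j‖ from hk]
end
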